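/- In the SVRG setup, for every reference vector x⋆ ∈ ℝ^p one has ∑_{i=1}^n (1/m_i)∑_{j=1}^{m_i} ‖v_{i,j} − ∇f_i(x_i)‖² ≤ 4L²∑_{i=1}^n ‖x_i − x̄‖² + 4nL²‖x̄ − x⋆‖² + 4L²∑_{i=1}^n ‖x⁰_i − x̄⁰‖² + 4nL²‖x̄⁰ − x⋆‖². -/

import Mathlib

/-!
Each residual `v i j - ∇fᵢ(xᵢ)` is the deviation of `dⱼ := ∇fᵢⱼ(xᵢ) - ∇fᵢⱼ(x⁰ᵢ)` from its mean
over `j`, so its mean square is at most the mean of `‖dⱼ‖²`, which `L`-smoothness bounds by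
`L² ‖xᵢ - x⁰ᵢ‖²`. Splitting `xᵢ - x⁰ᵢ = (xᵢ - x̄) + (x̄ - x⋆) - (x⁰ᵢ - x̄⁰) - (x̄⁰ - x⋆)` and using
`‖a + b‖² ≤ 2 (‖a‖² + ‖b‖²)` twice produces the four terms.
-/

open Finset InnerProductSpace

section Seminormed

variable {E : Type*} [SeminormedAddCommGroup E]

theorem norm_sub_sq_le_two_mul (a b c : E) :
    ‖a - c‖ ^ 2 ≤ 2 * (‖a - b‖ ^ 2 + ‖b - c‖ ^ 2) :=
  calc ‖a - c‖ ^ 2 ≤ (‖a - b‖ + ‖b - c‖) ^ 2 := by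
        gcongr; exact norm_sub_le_norm_sub_add_norm_sub a b c
    _ ≤ 2 * (‖a - b‖ ^ 2 + ‖b - c‖ ^ 2) := add_sq_le

theorem norm_sub_sq_le_four_mul (a b a' b' c : E) :
    ‖a - b‖ ^ 2 ≤ 4 * (‖a - a'‖ ^ 2 + ‖a' - c‖ ^ 2 + ‖b - b'‖ ^ 2 + ‖b' - c‖ ^ 2) := by
  have hab := norm_sub_sq_le_two_mul a c b
  have ha := norm_sub_sq_le_two_mul a a' c
  have hb := norm_sub_sq_le_two_mul b b' c
  rw [norm_sub_rev c b] at hab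
  linarith

end Seminormed

section InnerProduct

variable {F ι : Type*} [NormedAddCommGroup F] [InnerProductSpace ℝ F]

theorem sum_eq_card_smul_average (s : Finset ι) (b : ι → F) :
    ∑ j ∈ s, b j = (#s : ℝ) • ((1 / (#s : ℝ)) • ∑ j ∈ s, b j) := by
  rcases s.eq_empty_or_nonempty with rfl | hs
  · simp
  · rw [smul_smul, mul_one_div_cancel (by exact_mod_cast hs.card_ne_zero), one_smul]

theorem sum_norm_sub_average_sq_le (s : Finset ι) (b : ι → F) :
    ∑ j ∈ s, ‖b j - (1 / (#s : ℝ)) • ∑ l ∈ s, b l‖ ^ 2 ≤ ∑ j ∈ s, ‖b j‖ ^ 2 := by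
  set μ := (1 / (#s : ℝ)) • ∑ l ∈ s, b l
  have hinner : ∑ j ∈ s, ⟪b j, μ⟫_ℝ = #s * ‖μ‖ ^ 2 := by
    rw [← sum_inner, sum_eq_card_smul_average, real_inner_smul_left, real_inner_self_eq_norm_sq]
  calc ∑ j ∈ s, ‖b j - μ‖ ^ 2
      = ∑ j ∈ s, ‖b j‖ ^ 2 - 2 * ∑ j ∈ s, ⟪b j, μ⟫_ℝ + #s * ‖μ‖ ^ 2 := by
        simp only [norm_sub_sq_real, sum_add_distrib, sum_sub_distrib, ← mul_sum, sum_const,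
          nsmul_eq_mul]
    _ ≤ ∑ j ∈ s, ‖b j‖ ^ 2 := by rw [hinner]; nlinarith [sq_nonneg ‖μ‖, (#s).cast_nonneg (α := ℝ)]

theorem gradient_const_mul_sum [CompleteSpace F] {s : Finset ι} {g : ι → F → ℝ} {z : F}
    (hg : ∀ j ∈ s, DifferentiableAt ℝ (g j) z) (c : ℝ) :
    gradient (fun w => c * ∑ j ∈ s, g j w) z = c • ∑ j ∈ s, gradient (g j) z := by
  simp only [gradient, fderiv_const_mul (DifferentiableAt.fun_sum hg), fderiv_fun_sum hg,
    map_smul, map_sum]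

theorem svrg_local_variance_le [CompleteSpace F] (s : Finset ι) {g : ι → F → ℝ} {x x0 : F}
    {L : ℝ} (hx : ∀ j ∈ s, DifferentiableAt ℝ (g j) x)
    (hx0 : ∀ j ∈ s, DifferentiableAt ℝ (g j) x0)
    (hL : ∀ j ∈ s, ‖gradient (g j) x - gradient (g j) x0‖ ≤ L * ‖x - x0‖) :
    (1 / (#s : ℝ)) * ∑ j ∈ s,
      ‖gradient (g j) x - gradient (g j) x0 +
          gradient (fun z => (1 / (#s : ℝ)) * ∑ l ∈ s, g l z) x0 -
        gradient (fun z => (1 / (#s : ℝ)) * ∑ l ∈ s, g l z) x‖ ^ 2 ≤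
      L ^ 2 * ‖x - x0‖ ^ 2 := by
  set gbar : F → ℝ := fun z => (1 / (#s : ℝ)) * ∑ l ∈ s, g l z
  set b : ι → F := fun j => gradient (g j) x - gradient (g j) x0
  have hresidual : ∀ j, b j + gradient gbar x0 - gradient gbar x =
      b j - (1 / (#s : ℝ)) • ∑ l ∈ s, b l := fun j => by
    simp only [gbar, b, gradient_const_mul_sum hx, gradient_const_mul_sum hx0, sum_sub_distrib,
      smul_sub]
    abel
  have hb : ∀ j ∈ s, ‖b j‖ ^ 2 ≤ L ^ 2 * ‖x - x0‖ ^ 2 := fun j hj => by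
    rw [← mul_pow]; exact pow_le_pow_left₀ (norm_nonneg _) (hL j hj) 2
  calc _ = (1 / (#s : ℝ)) * ∑ j ∈ s, ‖b j - (1 / (#s : ℝ)) • ∑ l ∈ s, b l‖ ^ 2 := by
        simp only [← hresidual, b]
    _ ≤ (1 / (#s : ℝ)) * ∑ j ∈ s, ‖b j‖ ^ 2 :=
        mul_le_mul_of_nonneg_left (sum_norm_sub_average_sq_le s b) (by positivity)
    _ ≤ (1 / (#s : ℝ)) * ∑ _j ∈ s, L ^ 2 * ‖x - x0‖ ^ 2 := by gcongr with j hj; exact hb j hj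
    _ = (#s / #s : ℝ) * (L ^ 2 * ‖x - x0‖ ^ 2) := by rw [sum_const, nsmul_eq_mul]; ring
    _ ≤ L ^ 2 * ‖x - x0‖ ^ 2 := mul_le_of_le_one_left (by positivity) (div_self_le_one _)

end InnerProduct

theorem svrg_variance_bound {n p : ℕ}
    (m : Fin n → ℕ) (L : ℝ)
    (f : (i : Fin n) → Fin (m i) → EuclideanSpace ℝ (Fin p) → ℝ)
    (hdiff : ∀ i j, Differentiable ℝ (f i j))
    (hsmooth : ∀ i j x y, ‖gradient (f i j) x - gradient (f i j) y‖ ≤ L * ‖x - y‖)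
    (x x0 : Fin n → EuclideanSpace ℝ (Fin p))
    (xstar : EuclideanSpace ℝ (Fin p)) :
    let fi : Fin n → EuclideanSpace ℝ (Fin p) → ℝ :=
      fun i z => (1 / (m i : ℝ)) * ∑ j, f i j z
    let v : (i : Fin n) → Fin (m i) → EuclideanSpace ℝ (Fin p) :=
      fun i j => gradient (f i j) (x i) - gradient (f i j) (x0 i) +
        gradient (fi i) (x0 i)
    let xbar : EuclideanSpace ℝ (Fin p) := (1 / (n : ℝ)) • ∑ i, x i
    let xbar0 : EuclideanSpace ℝ (Fin p) := (1 / (n : ℝ)) • ∑ i, x0 i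
    ∑ i, (1 / (m i : ℝ)) * ∑ j, ‖v i j - gradient (fi i) (x i)‖ ^ 2 ≤
      4 * L ^ 2 * ∑ i, ‖x i - xbar‖ ^ 2 +
        4 * (n : ℝ) * L ^ 2 * ‖xbar - xstar‖ ^ 2 +
        4 * L ^ 2 * ∑ i, ‖x0 i - xbar0‖ ^ 2 +
        4 * (n : ℝ) * L ^ 2 * ‖xbar0 - xstar‖ ^ 2 := by
  intro fi v xbar xbar0
  have hlocal : ∀ i, (1 / (m i : ℝ)) * ∑ j, ‖v i j - gradient (fi i) (x i)‖ ^ 2 ≤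
      L ^ 2 * ‖x i - x0 i‖ ^ 2 := fun i => by
    have := svrg_local_variance_le univ (fun j _ => (hdiff i j).differentiableAt)
      (fun j _ => (hdiff i j).differentiableAt) (fun j _ => hsmooth i j (x i) (x0 i))
    simp only [card_univ, Fintype.card_fin] at this
    exact this
  calc ∑ i, (1 / (m i : ℝ)) * ∑ j, ‖v i j - gradient (fi i) (x i)‖ ^ 2
      ≤ ∑ i, L ^ 2 * (4 * (‖x i - xbar‖ ^ 2 + ‖xbar - xstar‖ ^ 2 +
          ‖x0 i - xbar0‖ ^ 2 + ‖xbar0 - xstar‖ ^ 2)) := by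
        refine sum_le_sum fun i _ => (hlocal i).trans ?_
        exact mul_le_mul_of_nonneg_left (norm_sub_sq_le_four_mul _ _ _ _ _) (sq_nonneg L)
    _ = _ := by
      simp only [mul_add, sum_add_distrib, ← mul_sum, sum_const, card_univ, Fintype.card_fin,
        nsmul_eq_mul]
      ring
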